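/- With the same setting and hypotheses (H1), (H2) as in the abstract Corollary: if S̃_N = {A ∈ S_N : A ⊄ {1,...,(N−1)·q_UX}} is empty, then S_{N+1} = S_N. -/
import Mathlib

/-- Translation (Minkowski sum with a singleton) of a finite set of naturals. -/
def shiftSet (A : Finset ℕ) (c : ℕ) : Finset ℕ := A.image (· + c)

/-- If `S̃_N = ∅` (no active set in `S_N` has active constraints in the last
two stages), then `S_{N+1} = S_N`. -/
theorem finite_determination_step
    (qUX qT N : ℕ) (hqUX : 0 < qUX) (hN : 1 ≤ N)
    (SN SN1 : Set (Finset ℕ))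
    (hbound : ∀ A ∈ SN, A ⊆ Finset.Icc 1 (N * qUX + qT))
    (H1 : ∀ A ∈ SN1, ∃ (Aj Al : Finset ℕ),
      Aj ⊆ Finset.Icc 1 qUX ∧ Al ∈ SN ∧ A = Aj ∪ shiftSet Al qUX)
    (H2 : ∀ A : Finset ℕ, A ⊆ Finset.Icc 1 (N * qUX) → (A ∈ SN ↔ A ∈ SN1))
    (htilde : ∀ A ∈ SN, A ⊆ Finset.Icc 1 ((N - 1) * qUX)) :
    SN1 = SN := by
  ext A
  constructor
  · intro hA
    obtain ⟨Aj, Al, hAj, hAl, rfl⟩ := H1 A hA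
    have hsub : Aj ∪ shiftSet Al qUX ⊆ Finset.Icc 1 (N * qUX) := by
      intro x hx
      rcases Finset.mem_union.1 hx with hx | hx
      · have := hAj hx
        simp only [Finset.mem_Icc] at this ⊢
        exact ⟨this.1, le_trans this.2 (Nat.le_mul_of_pos_left qUX hN)⟩
      · obtain ⟨a, ha, rfl⟩ := Finset.mem_image.1 hx
        have := htilde Al hAl ha
        simp only [Finset.mem_Icc] at this ⊢
        constructor
        · omega
        · have : a + qUX ≤ (N - 1) * qUX + qUX := by omega
          have h2 : (N - 1) * qUX + qUX = N * qUX := by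
            have : (N - 1 + 1) * qUX = N * qUX := by rw [Nat.sub_add_cancel hN]
            linarith [Nat.succ_mul (N-1) qUX]
          omega
    exact (H2 _ hsub).2 hA
  · intro hA
    have hsub : A ⊆ Finset.Icc 1 (N * qUX) := by
      intro x hx
      have := htilde A hA hx
      simp only [Finset.mem_Icc] at this ⊢
      refine ⟨this.1, le_trans this.2 ?_⟩
      exact Nat.mul_le_mul_right qUX (Nat.sub_le N 1)
    exact (H2 _ hsub).1 hA
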